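/- Let G be a connected graph with Perron vector X = (x_v) of Q(G). If u₁v ∉ E(G), u₂v ∈ E(G), u₁ ≠ u₂, and x_{u₁} ≥ x_{u₂}, then q(G - u₂v + u₁v) > q(G). -/

import Mathlib

open SimpleGraph Matrix Finset BigOperators

/-- The signless Laplacian matrix `Q(G) = D(G) + A(G)` of a simple graph, over `ℝ`. -/
noncomputable def signlessLaplacian {V : Type*} [Fintype V] [DecidableEq V]
    (G : SimpleGraph V) : Matrix V V ℝ :=
  letI := Classical.decRel G.Adj
  G.degMatrix ℝ + G.adjMatrix ℝ

/-- The `Q`-index of a graph: the largest eigenvalue of its signless Laplacian matrix. -/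
noncomputable def qIndex {V : Type*} [Fintype V] [DecidableEq V] (G : SimpleGraph V) : ℝ :=
  sSup (spectrum ℝ (signlessLaplacian G))

/-- The blow-up `C₅ ∘ (r₁,…,r₅)` of the 5-cycle: vertex `vᵢ` of `C₅` is replaced by an
independent set of `r i` vertices, and classes of adjacent cycle vertices are fully joined. -/
def C5blowup (r : Fin 5 → ℕ) : SimpleGraph ((i : Fin 5) × Fin (r i)) where
  Adj a b := a.1 = b.1 + 1 ∨ b.1 = a.1 + 1
  symm := ⟨fun a b h => Or.symm h⟩
  loopless := ⟨fun a h => by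
    have h5 : ∀ i : Fin 5, ¬ i = i + 1 := by decide
    rcases h with h | h <;> exact h5 _ h⟩

/-- The graph `C₅ • K_{1,t}` obtained by identifying a vertex of the 5-cycle
(the vertex `Sum.inl 0`) with the center of the star `K_{1,t}`. -/
def C5star (t : ℕ) : SimpleGraph (Fin 5 ⊕ Fin t) where
  Adj a b :=
    (∃ i j : Fin 5, a = Sum.inl i ∧ b = Sum.inl j ∧ (i = j + 1 ∨ j = i + 1)) ∨
    (a = Sum.inl 0 ∧ ∃ j : Fin t, b = Sum.inr j) ∨
    (b = Sum.inl 0 ∧ ∃ j : Fin t, a = Sum.inr j)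
  symm := ⟨fun a b h => by
    rcases h with ⟨i, j, hi, hj, hij⟩ | ⟨h1, j, h2⟩ | ⟨h1, j, h2⟩
    · exact Or.inl ⟨j, i, hj, hi, Or.symm hij⟩
    · exact Or.inr (Or.inr ⟨h1, j, h2⟩)
    · exact Or.inr (Or.inl ⟨h1, j, h2⟩)⟩
  loopless := ⟨fun a h => by
    have h5 : ∀ i : Fin 5, ¬ i = i + 1 := by decide
    rcases h with ⟨i, j, hi, hj, hij⟩ | ⟨h1, j, h2⟩ | ⟨h1, j, h2⟩
    · subst hi; cases hj; rcases hij with h | h <;> exact h5 _ h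
    · subst h1; simp at h2
    · subst h1; simp at h2⟩

/-- The star `K_{1,t}` with center `0` and `t` leaves. -/
def starG (t : ℕ) : SimpleGraph (Fin (t + 1)) where
  Adj a b := a ≠ b ∧ (a = 0 ∨ b = 0)
  symm := ⟨fun a b h => ⟨h.1.symm, h.2.symm⟩⟩
  loopless := ⟨fun a h => h.1 rfl⟩
/-!
Moving the edge `u₂v` to `u₁v` changes `Q` by `e₁e₁ᵀ - e₂e₂ᵀ`, where `eᵢ` is the indicator
vector of `{uᵢ, v}`. Hence `Xᵀ Q(G') X = q(G) + (x_{u₁} + x_v)² - (x_{u₂} + x_v)² ≥ q(G)`, and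
the Rayleigh principle gives `q(G') ≥ q(G)`. Equality would make `X` a `q(G)`-eigenvector of
`Q(G')`; comparing the `u₁`-coordinates of `Q(G') X` and `Q(G) X` then gives
`x_{u₁} + x_v = 0`, contradicting positivity.
-/

namespace SimpleGraph

theorem deleteEdges_sup_edge {V : Type*} {G : SimpleGraph V} {a b : V} (h : G.Adj a b) :
    G.deleteEdges {s(a, b)} ⊔ edge a b = G :=
  sdiff_sup_cancel ((edge_le_iff G).mpr (Or.inr h))

variable {V : Type*} [Fintype V] [DecidableEq V]

theorem signlessLaplacian_eq (G : SimpleGraph V) [DecidableRel G.Adj] :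
    signlessLaplacian G = G.degMatrix ℝ + G.adjMatrix ℝ := by
  rw [signlessLaplacian]
  congr!

theorem isHermitian_signlessLaplacian (G : SimpleGraph V) :
    (signlessLaplacian G).IsHermitian := by
  classical
  rw [signlessLaplacian_eq]
  exact (G.isHermitian_degMatrix (R := ℝ)).add (G.isHermitian_adjMatrix (R := ℝ))

theorem signlessLaplacian_mulVec_apply (G : SimpleGraph V) [DecidableRel G.Adj] (x : V → ℝ)
    (w : V) : (signlessLaplacian G *ᵥ x) w = ∑ z, if G.Adj w z then x w + x z else 0 := by
  rw [signlessLaplacian_eq, add_mulVec, Pi.add_apply, degMatrix_mulVec_apply,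
    adjMatrix_mulVec_apply, ← sum_filter, ← neighborFinset_eq_filter, sum_add_distrib,
    sum_const, card_neighborFinset_eq_degree, nsmul_eq_mul]

theorem signlessLaplacian_sup_mulVec {G H : SimpleGraph V} (h : Disjoint G H) (x : V → ℝ) :
    signlessLaplacian (G ⊔ H) *ᵥ x = signlessLaplacian G *ᵥ x + signlessLaplacian H *ᵥ x := by
  classical
  ext w
  simp only [Pi.add_apply, signlessLaplacian_mulVec_apply, ← sum_add_distrib, sup_adj]
  refine sum_congr rfl fun z _ => ?_
  by_cases hG : G.Adj w z
  · have hH : ¬H.Adj w z := fun hH => h.le_bot ⟨hG, hH⟩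
    simp [hG, hH]
  · simp [hG]

theorem signlessLaplacian_edge_mulVec {a b : V} (hab : a ≠ b) (x : V → ℝ) :
    signlessLaplacian (edge a b) *ᵥ x = (x a + x b) • (Pi.single a 1 + Pi.single b 1) := by
  ext w
  rw [signlessLaplacian_mulVec_apply]
  simp only [edge_adj]
  by_cases hwa : w = a
  · subst hwa; simp [hab, ite_and]
  by_cases hwb : w = b
  · subst hwb; simp [hwa, ite_and, add_comm]
  · simp [hwa, hwb]

theorem dotProduct_signlessLaplacian_edge_mulVec {a b : V} (hab : a ≠ b) (x : V → ℝ) :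
    x ⬝ᵥ signlessLaplacian (edge a b) *ᵥ x = (x a + x b) ^ 2 := by
  rw [signlessLaplacian_edge_mulVec hab, dotProduct_smul, dotProduct_add, dotProduct_single,
    dotProduct_single, smul_eq_mul]
  ring

theorem signlessLaplacian_rotate_mulVec {G : SimpleGraph V} {u₁ u₂ v : V} (h1 : ¬G.Adj u₁ v)
    (h2 : G.Adj u₂ v) (x : V → ℝ) :
    signlessLaplacian (G.deleteEdges {s(u₂, v)} ⊔ edge u₁ v) *ᵥ x =
      signlessLaplacian G *ᵥ x - signlessLaplacian (edge u₂ v) *ᵥ x +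
        signlessLaplacian (edge u₁ v) *ᵥ x := by
  set H := G.deleteEdges {s(u₂, v)}
  have hH₁ : Disjoint H (edge u₁ v) := (disjoint_edge H).mpr fun h => h1 (G.deleteEdges_le _ h)
  have hH₂ : Disjoint H (edge u₂ v) := (disjoint_edge H).mpr (by simp [H])
  calc signlessLaplacian (H ⊔ edge u₁ v) *ᵥ x
      = signlessLaplacian H *ᵥ x + signlessLaplacian (edge u₁ v) *ᵥ x :=
        signlessLaplacian_sup_mulVec hH₁ x
    _ = signlessLaplacian (H ⊔ edge u₂ v) *ᵥ x - signlessLaplacian (edge u₂ v) *ᵥ x +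
          signlessLaplacian (edge u₁ v) *ᵥ x := by
        rw [signlessLaplacian_sup_mulVec hH₂]; abel
    _ = _ := by rw [deleteEdges_sup_edge h2]

end SimpleGraph

namespace Matrix

variable {n : Type*} [Fintype n] [DecidableEq n] {A : Matrix n n ℝ}

theorem IsHermitian.posSemidef_sSup_spectrum_smul_one_sub (hA : A.IsHermitian) :
    (sSup (spectrum ℝ A) • 1 - A).PosSemidef := by
  rw [posSemidef_iff_isHermitian_and_spectrum_nonneg]
  refine ⟨(isHermitian_one.smul (IsSelfAdjoint.all _)).sub hA, ?_⟩
  rw [← Algebra.algebraMap_eq_smul_one, ← spectrum.singleton_sub_eq]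
  rintro _ ⟨_, rfl, μ, hμ, rfl⟩
  exact sub_nonneg.mpr (le_csSup A.finite_real_spectrum.bddAbove hμ)

theorem star_dotProduct_smul_one_sub_mulVec (c : ℝ) (x : n → ℝ) :
    star x ⬝ᵥ (c • 1 - A) *ᵥ x = c * (x ⬝ᵥ x) - x ⬝ᵥ A *ᵥ x := by
  rw [star_trivial, sub_mulVec, smul_mulVec, one_mulVec, dotProduct_sub, dotProduct_smul,
    smul_eq_mul]

theorem IsHermitian.dotProduct_mulVec_le_sSup_spectrum (hA : A.IsHermitian) (x : n → ℝ) :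
    x ⬝ᵥ A *ᵥ x ≤ sSup (spectrum ℝ A) * (x ⬝ᵥ x) := by
  have hnonneg := hA.posSemidef_sSup_spectrum_smul_one_sub.dotProduct_mulVec_nonneg x
  rw [star_dotProduct_smul_one_sub_mulVec] at hnonneg
  linarith

theorem IsHermitian.mulVec_eq_of_dotProduct_mulVec_eq (hA : A.IsHermitian) {x : n → ℝ}
    (h : x ⬝ᵥ A *ᵥ x = sSup (spectrum ℝ A) * (x ⬝ᵥ x)) :
    A *ᵥ x = sSup (spectrum ℝ A) • x := by
  have hzero := (hA.posSemidef_sSup_spectrum_smul_one_sub.dotProduct_mulVec_zero_iff x).mp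
    (by rw [star_dotProduct_smul_one_sub_mulVec, h, sub_self])
  rwa [sub_mulVec, smul_mulVec, one_mulVec, sub_eq_zero, eq_comm] at hzero

theorem IsHermitian.lt_sSup_spectrum (hA : A.IsHermitian) {x : n → ℝ} {μ : ℝ} (hx : x ≠ 0)
    (hle : μ * (x ⬝ᵥ x) ≤ x ⬝ᵥ A *ᵥ x) (hne : A *ᵥ x ≠ μ • x) : μ < sSup (spectrum ℝ A) := by
  have hxx : 0 < x ⬝ᵥ x := by simpa using dotProduct_self_star_pos_iff.mpr hx
  have hup := hA.dotProduct_mulVec_le_sSup_spectrum x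
  have hμ : μ ≤ sSup (spectrum ℝ A) := le_of_mul_le_mul_right (hle.trans hup) hxx
  refine hμ.lt_of_ne fun heq => hne ?_
  rw [heq]
  exact hA.mulVec_eq_of_dotProduct_mulVec_eq (le_antisymm hup (heq ▸ hle))

end Matrix

theorem stmt11_general {V : Type*} [Fintype V] [DecidableEq V] (G : SimpleGraph V)
    (X : V → ℝ)
    (hpos : ∀ w, 0 < X w)
    (heig : signlessLaplacian G *ᵥ X = qIndex G • X)
    (u₁ u₂ v : V) (h1 : ¬ G.Adj u₁ v) (h2 : G.Adj u₂ v)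
    (hv : u₁ ≠ v) (hx : X u₂ ≤ X u₁) :
    qIndex G <
      qIndex (G.deleteEdges {s(u₂, v)} ⊔ SimpleGraph.fromEdgeSet {s(u₁, v)}) := by
  change qIndex G < qIndex (G.deleteEdges {s(u₂, v)} ⊔ edge u₁ v)
  have hX : X ≠ 0 := fun h => (hpos v).ne' (congrFun h v)
  have hne : u₁ ≠ u₂ := by rintro rfl; exact h1 h2
  have hrot := signlessLaplacian_rotate_mulVec h1 h2 X
  refine (isHermitian_signlessLaplacian _).lt_sSup_spectrum hX ?_ fun h => ?_
  · have hsq : (X u₂ + X v) ^ 2 ≤ (X u₁ + X v) ^ 2 :=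
      pow_le_pow_left₀ (by linarith [hpos u₂, hpos v]) (by linarith) 2
    rw [hrot, dotProduct_add, dotProduct_sub, heig, dotProduct_smul, smul_eq_mul,
      dotProduct_signlessLaplacian_edge_mulVec (G.ne_of_adj h2),
      dotProduct_signlessLaplacian_edge_mulVec hv]
    linarith
  · have hsum : X u₁ + X v = 0 := by
      simpa [heig, signlessLaplacian_edge_mulVec, G.ne_of_adj h2, hv, hne] using
        congrFun (hrot.symm.trans h) u₁
    linarith [hpos u₁, hpos v]

/-- Rotation lemma: let `G` be connected with Perron vector `X` of `Q(G)`.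
If `u₁v ∉ E(G)`, `u₂v ∈ E(G)` and `x_{u₁} ≥ x_{u₂}`, then
`q(G - u₂v + u₁v) > q(G)`. -/
theorem stmt11 {V : Type*} [Fintype V] [DecidableEq V] (G : SimpleGraph V)
    (hG : G.Connected) (X : V → ℝ)
    (hpos : ∀ w, 0 < X w) (hunit : ∑ w, X w ^ 2 = 1)
    (heig : signlessLaplacian G *ᵥ X = qIndex G • X)
    (u₁ u₂ v : V) (h1 : ¬ G.Adj u₁ v) (h2 : G.Adj u₂ v)
    (hne : u₁ ≠ u₂) (hv : u₁ ≠ v) (hx : X u₂ ≤ X u₁) :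
    qIndex G <
      qIndex (G.deleteEdges {s(u₂, v)} ⊔ SimpleGraph.fromEdgeSet {s(u₁, v)}) :=
  stmt11_general G X hpos heig u₁ u₂ v h1 h2 hv hx
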